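/- arXiv:1609.02928 — 2 statements merged into one kernel-verified Lean document; each statement's English description precedes it below -/
import Mathlib

section
/- Let X ⊆ ℝ² be a polytope with exactly n_v vertices (extreme points). Then there exists a finite set D ⊆ ℝ² of directions with |D| ≤ 3·n_v + 1 such that D determines X within the class of all polytopes in ℝ². (This is the determination content of the convergence of Algorithm 1 in the case where the known upper bound on the number of vertices strictly exceeds n_v, including the case of no known bound: the algorithm terminates after at most 3n_v + 1 oracle calls with S_v = X_v.) -/
open RealInnerProductSpace

/-- Support function of a subset of `ℝⁿ`. -/
noncomputable def supp {n : ℕ} (X : Set (EuclideanSpace ℝ (Fin n)))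
    (d : EuclideanSpace ℝ (Fin n)) : ℝ :=
  sSup ((fun v => ⟪v, d⟫) '' X)

/-- `X` is a polytope: the convex hull of a nonempty finite set. -/
def IsPolytope {n : ℕ} (X : Set (EuclideanSpace ℝ (Fin n))) : Prop :=
  ∃ F : Finset (EuclideanSpace ℝ (Fin n)), F.Nonempty ∧ X = convexHull ℝ (F : Set _)

/-- The finite direction set `D` determines `X` within the class `𝒞`. -/
def Determines {n : ℕ} (𝒞 : Set (Set (EuclideanSpace ℝ (Fin n))))
    (D : Finset (EuclideanSpace ℝ (Fin n))) (X : Set (EuclideanSpace ℝ (Fin n))) : Prop :=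
  ∀ Y ∈ 𝒞, (∀ d ∈ D, supp Y d = supp X d) → Y = X

/-!
Every vertex `v` of a polytope `X` is exposed by some direction `e v`. In the plane, the outer
normals of the edges of `X` together with the `e v` also cut `X` out: if `p ∉ X` has nearest
point `q ∈ X`, then `p - q` is an outer normal at `q`. Either `q` lies on an edge, whose normal is
a positive multiple of `p - q`, or `q` is a vertex `u`, and then one of the two edge normals at `u`,
or `e u` when `X` is a segment, makes an acute angle with `p - q`. A polytope `Y` with the same
support values in these directions therefore lies in `X`, and its maximizer of `⟪·, e v⟫` is the
vertex `v`, so `Y ⊇ X`. Since no three vertices are collinear, every vertex starts at most one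
edge, so there are at most `2 n_v` directions. A single point is determined by the four
coordinate directions `±(1, 0)`, `±(0, 1)`.
-/

section Convex

variable {F : Type*} [NormedAddCommGroup F] [InnerProductSpace ℝ F]

theorem inner_lt_of_mem_convexHull {s : Set F} {u d x : F}
    (hs : ∀ w ∈ s, w ≠ u → ⟪w, d⟫ < ⟪u, d⟫) (hx : x ∈ convexHull ℝ s) (hxu : x ≠ u) :
    ⟪x, d⟫ < ⟪u, d⟫ := by
  have hconv : Convex ℝ {y : F | y = u ∨ ⟪y, d⟫ < ⟪u, d⟫} := by
    rw [convex_iff_openSegment_subset]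
    rintro a ha b hb _ ⟨α, β, hα, hβ, hαβ, rfl⟩
    obtain rfl : α = 1 - β := eq_sub_of_add_eq hαβ
    rw [Set.mem_ofPred_eq, inner_add_left, real_inner_smul_left, real_inner_smul_left]
    rcases ha with rfl | ha <;> rcases hb with rfl | hb
    · exact .inl (Convex.combo_self hαβ _)
    · exact .inr (by linarith [mul_lt_mul_of_pos_left hb hβ])
    · exact .inr (by linarith [mul_lt_mul_of_pos_left ha hα])
    · exact .inr (by linarith [mul_lt_mul_of_pos_left ha hα, mul_lt_mul_of_pos_left hb hβ])
  exact (convexHull_min (fun w hw => (em (w = u)).imp_right (hs w hw)) hconv hx).resolve_left hxu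

theorem isMaxOn_inner_convexHull {s : Set F} {n a : F} (h : IsMaxOn (⟪·, n⟫) s a) :
    IsMaxOn (⟪·, n⟫) (convexHull ℝ s) a :=
  convexHull_min h <| convex_halfSpace_le
    ⟨fun x y => inner_add_left x y n, fun c x => real_inner_smul_left x n c⟩ _

theorem isMaxOn_inner_of_smul {s : Set F} {n a : F} {c : ℝ} (hc : 0 < c)
    (h : IsMaxOn (⟪·, c • n⟫) s a) : IsMaxOn (⟪·, n⟫) s a :=
  isMaxOn_iff.2 fun x hx => le_of_mul_le_mul_left
    (by simpa only [real_inner_smul_right] using isMaxOn_iff.1 h x hx) hc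

theorem exists_forall_inner_lt_of_mem_extremePoints [CompleteSpace F] {s : Set F}
    (hs : s.Finite) {v : F} (hv : v ∈ (convexHull ℝ s).extremePoints ℝ) :
    ∃ e : F, ∀ x ∈ convexHull ℝ s, x ≠ v → ⟪x, e⟫ < ⟪v, e⟫ := by
  have hvK : v ∉ convexHull ℝ (s \ {v}) := fun h =>
    ((convex_convexHull ℝ s).mem_extremePoints_iff_mem_sdiff_convexHull_sdiff.1 hv).2
      (convexHull_mono (Set.sdiff_subset_sdiff_left (subset_convexHull ℝ s)) h)
  obtain ⟨l, c, hl, hc⟩ := geometric_hahn_banach_closed_point (convex_convexHull ℝ _)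
    (hs.sdiff.isClosed_convexHull ℝ) hvK
  have hle : ∀ x, ⟪x, (InnerProductSpace.toDual ℝ F).symm l⟫ = l x := fun x => by
    rw [real_inner_comm, InnerProductSpace.toDual_symm_apply]
  refine ⟨(InnerProductSpace.toDual ℝ F).symm l, fun x hx hxv =>
    inner_lt_of_mem_convexHull (fun w hw hwv => ?_) hx hxv⟩
  rw [hle, hle]
  exact (hl w (subset_convexHull ℝ _ ⟨hw, hwv⟩)).trans hc

theorem not_collinear_of_mem_extremePoints {A : Set F} {x y z : F}
    (hx : x ∈ A.extremePoints ℝ) (hy : y ∈ A.extremePoints ℝ) (hz : z ∈ A.extremePoints ℝ)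
    (hxy : x ≠ y) (hxz : x ≠ z) (hyz : y ≠ z) : ¬ Collinear ℝ {x, y, z} := fun h => by
  rcases h.wbtw_or_wbtw_or_wbtw with h | h | h
  · rcases (mem_extremePoints_iff_forall_segment.1 hy).2 x hx.1 z hz.1 h.mem_segment with h | h
    exacts [hxy h, hyz h.symm]
  · rcases (mem_extremePoints_iff_forall_segment.1 hz).2 y hy.1 x hx.1 h.mem_segment with h | h
    exacts [hyz h, hxz h]
  · rcases (mem_extremePoints_iff_forall_segment.1 hx).2 z hz.1 y hy.1 h.mem_segment with h | h
    exacts [hxz h.symm, hxy h.symm]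

end Convex

section Support

variable {n : ℕ}

theorem IsPolytope.isCompact {X : Set (EuclideanSpace ℝ (Fin n))} (hX : IsPolytope X) :
    IsCompact X := by
  obtain ⟨F, -, rfl⟩ := hX
  exact F.finite_toSet.isCompact_convexHull ℝ

theorem IsPolytope.convex {X : Set (EuclideanSpace ℝ (Fin n))} (hX : IsPolytope X) :
    Convex ℝ X := by
  obtain ⟨F, -, rfl⟩ := hX
  exact convex_convexHull ℝ _

theorem IsPolytope.nonempty {X : Set (EuclideanSpace ℝ (Fin n))} (hX : IsPolytope X) :
    X.Nonempty := by
  obtain ⟨F, hF, rfl⟩ := hX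
  exact hF.to_set.convexHull

theorem IsPolytope.extremePoints_finite {X : Set (EuclideanSpace ℝ (Fin n))}
    (hX : IsPolytope X) : (X.extremePoints ℝ).Finite := by
  obtain ⟨F, -, rfl⟩ := hX
  exact F.finite_toSet.subset extremePoints_convexHull_subset

theorem IsPolytope.convexHull_extremePoints {X : Set (EuclideanSpace ℝ (Fin n))}
    (hX : IsPolytope X) : convexHull ℝ (X.extremePoints ℝ) = X := by
  rw [← (hX.extremePoints_finite.isClosed_convexHull ℝ).closure_eq,
    closure_convexHull_extremePoints hX.isCompact hX.convex]

theorem le_supp {X : Set (EuclideanSpace ℝ (Fin n))} (hX : IsCompact X)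
    {x : EuclideanSpace ℝ (Fin n)} (hx : x ∈ X) (d : EuclideanSpace ℝ (Fin n)) :
    ⟪x, d⟫ ≤ supp X d :=
  le_csSup (hX.image (by fun_prop)).bddAbove ⟨x, hx, rfl⟩

theorem exists_inner_eq_supp {X : Set (EuclideanSpace ℝ (Fin n))} (hX : IsCompact X)
    (hne : X.Nonempty) (d : EuclideanSpace ℝ (Fin n)) : ∃ x ∈ X, ⟪x, d⟫ = supp X d :=
  (hX.image (by fun_prop)).sSup_mem (hne.image _)

theorem supp_eq_inner_of_isMaxOn {X : Set (EuclideanSpace ℝ (Fin n))}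
    {q d : EuclideanSpace ℝ (Fin n)} (hq : q ∈ X) (h : IsMaxOn (⟪·, d⟫) X q) :
    supp X d = ⟪q, d⟫ :=
  IsGreatest.csSup_eq ⟨⟨q, hq, rfl⟩, by rintro _ ⟨x, hx, rfl⟩; exact isMaxOn_iff.1 h x hx⟩

theorem subset_of_supp_eq {X Y : Set (EuclideanSpace ℝ (Fin n))} (hY : IsCompact Y)
    {D : Finset (EuclideanSpace ℝ (Fin n))} (hcut : ∀ p ∉ X, ∃ d ∈ D, supp X d < ⟪p, d⟫)
    (hYX : ∀ d ∈ D, supp Y d = supp X d) : Y ⊆ X := fun y hy => by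
  by_contra hyX
  obtain ⟨d, hd, hlt⟩ := hcut y hyX
  exact (le_supp hY hy d).not_gt (hYX d hd ▸ hlt)

theorem determines_of_separates_of_exposes {X : Set (EuclideanSpace ℝ (Fin n))} (hX : IsPolytope X)
    {D : Finset (EuclideanSpace ℝ (Fin n))} (hcut : ∀ p ∉ X, ∃ d ∈ D, supp X d < ⟪p, d⟫)
    (hexp : ∀ v ∈ X.extremePoints ℝ, ∃ e ∈ D, ∀ x ∈ X, x ≠ v → ⟪x, e⟫ < ⟪v, e⟫) :
    Determines {Y | IsPolytope Y} D X := by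
  intro Y hY hYX
  have hYsub : Y ⊆ X := subset_of_supp_eq hY.isCompact hcut hYX
  refine hYsub.antisymm ?_
  rw [← hX.convexHull_extremePoints]
  refine convexHull_min (fun v hv => ?_) hY.convex
  obtain ⟨e, he, hev⟩ := hexp v hv
  obtain ⟨y, hy, hye⟩ := exists_inner_eq_supp hY.isCompact hY.nonempty e
  obtain rfl : y = v := by
    by_contra hyv
    refine (hev y (hYsub hy) hyv).not_ge ?_
    rw [hye, hYX e he]
    exact le_supp hX.isCompact hv.1 e
  exact hy

theorem exists_supp_lt_of_notMem {X : Set (EuclideanSpace ℝ (Fin n))} (hX : IsPolytope X)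
    {D : Finset (EuclideanSpace ℝ (Fin n))}
    (hD : ∀ q ∈ X, ∀ d ≠ 0, IsMaxOn (⟪·, d⟫) X q → ∃ m ∈ D, IsMaxOn (⟪·, m⟫) X q ∧ 0 < ⟪d, m⟫)
    {p : EuclideanSpace ℝ (Fin n)} (hp : p ∉ X) : ∃ m ∈ D, supp X m < ⟪p, m⟫ := by
  obtain ⟨q, hq, hpq⟩ :=
    exists_norm_eq_iInf_of_complete_convex hX.nonempty hX.isCompact.isComplete hX.convex p
  have hnormal : IsMaxOn (⟪·, p - q⟫) X q := isMaxOn_iff.2 fun x hx => by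
    have := (norm_eq_iInf_iff_real_inner_le_zero hX.convex hq).1 hpq x hx
    rw [real_inner_comm, inner_sub_left] at this
    linarith
  obtain ⟨m, hm, hqm, hpos⟩ :=
    hD q hq (p - q) (sub_ne_zero.2 fun h => hp (h ▸ hq)) hnormal
  refine ⟨m, hm, ?_⟩
  rw [supp_eq_inner_of_isMaxOn hq hqm]
  rw [inner_sub_left] at hpos
  linarith

theorem exists_determines_singleton (v : EuclideanSpace ℝ (Fin n)) :
    ∃ D : Finset (EuclideanSpace ℝ (Fin n)), D.card ≤ 2 * n ∧
      Determines {Y | IsPolytope Y} D {v} := by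
  classical
  let B : Finset (EuclideanSpace ℝ (Fin n)) := Finset.univ.image fun i => EuclideanSpace.single i 1
  refine ⟨B ∪ B.image Neg.neg, ?_, fun Y hY hYv => ?_⟩
  · refine (Finset.card_union_le _ _).trans ?_
    have : B.card ≤ n := Finset.card_image_le.trans (by simp)
    have := Finset.card_image_le (s := B) (f := Neg.neg)
    omega
  refine hY.nonempty.subset_singleton_iff.1 (subset_of_supp_eq hY.isCompact (fun p hp => ?_) hYv)
  have hsupp : ∀ d, supp {v} d = ⟪v, d⟫ := fun d =>
    supp_eq_inner_of_isMaxOn rfl (isMaxOn_iff.2 fun x hx => hx ▸ le_rfl)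
  obtain ⟨i, hi⟩ : ∃ i, p i ≠ v i := by
    by_contra! h
    exact hp (by ext i; exact h i)
  have hsingle : EuclideanSpace.single i 1 ∈ B := Finset.mem_image_of_mem _ (Finset.mem_univ i)
  rcases hi.lt_or_gt with h | h
  · refine ⟨-EuclideanSpace.single i 1,
      Finset.mem_union_right _ (Finset.mem_image_of_mem _ hsingle), ?_⟩
    simpa [hsupp, EuclideanSpace.inner_single_right] using h
  · refine ⟨EuclideanSpace.single i 1, Finset.mem_union_left _ hsingle, ?_⟩
    simpa [hsupp, EuclideanSpace.inner_single_right] using h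

end Support

namespace Orientation

open Module

variable {E : Type*} [NormedAddCommGroup E] [InnerProductSpace ℝ E] [Fact (finrank ℝ E = 2)]
  (o : Orientation ℝ E (Fin 2))

local notation "ω" => o.areaForm
local notation "J" => o.rightAngleRotation

theorem exists_smul_eq_of_areaForm_eq_zero {a b : E} (ha : a ≠ 0) (h : ω a b = 0) :
    ∃ r : ℝ, b = r • a := by
  rcases le_total 0 ⟪a, b⟫ with hab | hab
  · obtain ⟨r, -, hr⟩ :=
      ((o.nonneg_inner_and_areaForm_eq_zero_iff_sameRay a b).1 ⟨hab, h⟩).exists_nonneg_left ha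
    exact ⟨r, hr.symm⟩
  · obtain ⟨r, -, hr⟩ := ((o.nonneg_inner_and_areaForm_eq_zero_iff_sameRay a (-b)).1
      ⟨by rw [inner_neg_right]; linarith, by rw [map_neg, h, neg_zero]⟩).exists_nonneg_left ha
    exact ⟨-r, by rw [neg_smul, hr, neg_neg]⟩

theorem areaForm_nonpos_of_div_le {x y d : E} (hx : ⟪x, d⟫ < 0) (hy : ⟪y, d⟫ < 0)
    (h : ω x d / -⟪x, d⟫ ≤ ω y d / -⟪y, d⟫) : ω y x ≤ 0 := by
  rw [div_le_div_iff₀ (by linarith) (by linarith)] at h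
  have hd : 0 < ‖d‖ ^ 2 := by
    have : d ≠ 0 := by rintro rfl; simp at hx
    positivity
  have hid := o.inner_mul_areaForm_sub d y x
  rw [o.areaForm_swap d x, o.areaForm_swap d y, real_inner_comm y d, real_inner_comm x d] at hid
  exact nonpos_of_mul_nonpos_right (by linarith) hd

theorem exists_isMaxOn_inner_rightAngleRotation {V : Finset E} {u d : E}
    (hd : ∀ w ∈ V, w ≠ u → ⟪w, d⟫ < ⟪u, d⟫) (hpos : ∃ w ∈ V, w ≠ u ∧ 0 < ω (w - u) d) :
    ∃ v ∈ V, v ≠ u ∧ IsMaxOn (⟪·, J (v - u)⟫) V u ∧ 0 < ⟪d, J (v - u)⟫ := by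
  classical
  have hneg : ∀ w ∈ V, w ≠ u → ⟪w - u, d⟫ < 0 := fun w hw hwu => by
    rw [inner_sub_left]; linarith [hd w hw hwu]
  obtain ⟨w₀, hw₀, hw₀u, hw₀pos⟩ := hpos
  obtain ⟨v, hv, hvmax⟩ := (V.erase u).exists_max_image (fun w => ω (w - u) d / -⟪w - u, d⟫)
    ⟨w₀, Finset.mem_erase.2 ⟨hw₀u, hw₀⟩⟩
  obtain ⟨hvu, hvV⟩ := Finset.mem_erase.1 hv
  -- all `w - u` point into the half-plane `⟪·, d⟫ < 0`, and `v - u` is extremal among them in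
  -- angle, so all of `V` lies on one side of the line `u v`
  refine ⟨v, hvV, hvu, isMaxOn_iff.2 fun w hw => ?_, ?_⟩
  · obtain rfl | hwu := eq_or_ne w u
    · exact le_rfl
    have := o.areaForm_nonpos_of_div_le (hneg w hw hwu) (hneg v hvV hvu)
      (hvmax w (Finset.mem_erase.2 ⟨hwu, hw⟩))
    have h2 : ⟪w - u, J (v - u)⟫ = ω (v - u) (w - u) := by
      rw [o.inner_rightAngleRotation_right, o.areaForm_swap, neg_neg]
    rw [inner_sub_left] at h2
    linarith
  · have hw₀slope : 0 < ω (w₀ - u) d / -⟪w₀ - u, d⟫ :=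
      div_pos hw₀pos (neg_pos.2 (hneg w₀ hw₀ hw₀u))
    have := (div_pos_iff_of_pos_right (neg_pos.2 (hneg v hvV hvu))).1
      (hw₀slope.trans_le (hvmax w₀ (Finset.mem_erase.2 ⟨hw₀u, hw₀⟩)))
    rwa [o.inner_rightAngleRotation_right, o.areaForm_swap, neg_neg]

open Classical in
/-- `J (v - u)` is the outer normal of the edge `[u, v]` of `convexHull V`. -/
noncomputable def edgeNormals (V : Finset E) : Finset E :=
  (V.offDiag.filter fun p => IsMaxOn (⟪·, J (p.2 - p.1)⟫) V p.1).image fun p => J (p.2 - p.1)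

theorem rightAngleRotation_sub_mem_edgeNormals {V : Finset E} {u v : E} (hu : u ∈ V)
    (hv : v ∈ V) (huv : u ≠ v) (h : IsMaxOn (⟪·, J (v - u)⟫) V u) :
    J (v - u) ∈ o.edgeNormals V := by
  classical
  exact Finset.mem_image.2
    ⟨(u, v), Finset.mem_filter.2 ⟨Finset.mem_offDiag.2 ⟨hu, hv, huv⟩, h⟩, rfl⟩

theorem eq_of_isMaxOn_inner_rightAngleRotation {V : Finset E}
    (hV : (V : Set E) ⊆ (convexHull ℝ (V : Set E)).extremePoints ℝ) {u v v' : E}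
    (hu : u ∈ V) (hv : v ∈ V) (hv' : v' ∈ V) (hvu : v ≠ u) (hv'u : v' ≠ u)
    (h : IsMaxOn (⟪·, J (v - u)⟫) V u) (h' : IsMaxOn (⟪·, J (v' - u)⟫) V u) : v = v' := by
  have hω : ω (v - u) (v' - u) = 0 := by
    have h₁ := isMaxOn_iff.1 h v' hv'
    have h₂ := isMaxOn_iff.1 h' v hv
    have e₁ : ⟪v' - u, J (v - u)⟫ = ω (v - u) (v' - u) := by
      rw [o.inner_rightAngleRotation_right, o.areaForm_swap, neg_neg]
    have e₂ : ⟪v - u, J (v' - u)⟫ = -ω (v - u) (v' - u) := o.inner_rightAngleRotation_right _ _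
    rw [inner_sub_left] at e₁ e₂
    linarith
  obtain ⟨r, hr⟩ := o.exists_smul_eq_of_areaForm_eq_zero (sub_ne_zero.2 hvu) hω
  by_contra hvv'
  refine not_collinear_of_mem_extremePoints (hV hu) (hV hv) (hV hv') hvu.symm hv'u.symm hvv' ?_
  rw [collinear_iff_of_mem (Set.mem_insert u _)]
  refine ⟨v - u, ?_⟩
  simp only [Set.mem_insert_iff, Set.mem_singleton_iff, vadd_eq_add]
  rintro p (rfl | rfl | rfl)
  exacts [⟨0, by simp⟩, ⟨1, by simp⟩, ⟨r, by rw [← hr, sub_add_cancel]⟩]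

theorem card_edgeNormals_le {V : Finset E}
    (hV : (V : Set E) ⊆ (convexHull ℝ (V : Set E)).extremePoints ℝ) :
    (o.edgeNormals V).card ≤ V.card := by
  classical
  refine Finset.card_image_le.trans (Finset.card_le_card_of_injOn Prod.fst
    (fun p hp => (Finset.mem_offDiag.1 (Finset.mem_filter.1 hp).1).1) ?_)
  rintro ⟨u, v⟩ hp ⟨u', v'⟩ hp' (rfl : u = u')
  simp only [Finset.coe_filter, Finset.mem_offDiag, Set.mem_ofPred_eq] at hp hp'
  rw [o.eq_of_isMaxOn_inner_rightAngleRotation hV hp.1.1 hp.1.2.1 hp'.1.2.1 (Ne.symm hp.1.2.2)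
    (Ne.symm hp'.1.2.2) hp.2 hp'.2]

theorem exists_mem_edgeNormals_of_isMaxOn {V : Finset E} {u v d : E} (hu : u ∈ V) (hv : v ∈ V)
    (huv : u ≠ v) (hd : d ≠ 0) (hmax : IsMaxOn (⟪·, d⟫) V u) (hvd : ⟪v, d⟫ = ⟪u, d⟫) :
    ∃ m ∈ o.edgeNormals V, ∃ c : ℝ, 0 < c ∧ d = c • m := by
  have hJ : J (v - u) ≠ 0 :=
    (LinearIsometryEquiv.map_eq_zero_iff _).not.2 (sub_ne_zero.2 huv.symm)
  obtain ⟨r, hr⟩ := o.exists_smul_eq_of_areaForm_eq_zero hJ (by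
    rw [← o.inner_rightAngleRotation_left, o.rightAngleRotation_rightAngleRotation, inner_neg_left,
      inner_sub_left, hvd, sub_self, neg_zero])
  rcases lt_trichotomy r 0 with hr₀ | rfl | hr₀
  · have hmax' : IsMaxOn (⟪·, d⟫) V v :=
      isMaxOn_iff.2 fun w hw => (isMaxOn_iff.1 hmax w hw).trans hvd.ge
    have hd' : d = (-r) • J (u - v) := by
      rw [hr, ← neg_sub v u, map_neg, smul_neg, neg_smul, neg_neg]
    exact ⟨_, o.rightAngleRotation_sub_mem_edgeNormals hv hu huv.symm
      (isMaxOn_inner_of_smul (neg_pos.2 hr₀) (hd' ▸ hmax')), -r, neg_pos.2 hr₀, hd'⟩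
  · exact absurd (by rw [hr, zero_smul]) hd
  · exact ⟨_, o.rightAngleRotation_sub_mem_edgeNormals hu hv huv
      (isMaxOn_inner_of_smul hr₀ (hr ▸ hmax)), r, hr₀, hr⟩

theorem exists_normal_at_vertex [DecidableEq E] {V : Finset E} {u d e : E} (hu : u ∈ V)
    (hV : ∃ w ∈ V, w ≠ u) (hd : ∀ w ∈ V, w ≠ u → ⟪w, d⟫ < ⟪u, d⟫)
    (he : ∀ w ∈ V, w ≠ u → ⟪w, e⟫ < ⟪u, e⟫) :
    ∃ m ∈ insert e (o.edgeNormals V), IsMaxOn (⟪·, m⟫) V u ∧ 0 < ⟪d, m⟫ := by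
  obtain ⟨w, hw, hwu⟩ := hV
  rcases lt_trichotomy (ω (w - u) d) 0 with hω | hω | hω
  -- reversing the orientation reduces this case to the last one
  · obtain ⟨v, hv, hvu, hmax, hpos⟩ := (-o).exists_isMaxOn_inner_rightAngleRotation hd
      ⟨w, hw, hwu, by rw [areaForm_neg_orientation]; simpa using hω⟩
    simp only [rightAngleRotation_neg_orientation, ← map_neg, neg_sub] at hmax hpos
    have hmax' : IsMaxOn (⟪·, J (u - v)⟫) V v := by
      have : ⟪v, J (u - v)⟫ = ⟪u, J (u - v)⟫ := by
        rw [← sub_eq_zero, ← inner_sub_left, ← neg_sub, inner_neg_left,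
          o.inner_rightAngleRotation_right, o.areaForm_apply_self, neg_zero, neg_zero]
      exact isMaxOn_iff.2 fun x hx => this ▸ isMaxOn_iff.1 hmax x hx
    exact ⟨_, Finset.mem_insert_of_mem
      (o.rightAngleRotation_sub_mem_edgeNormals hv hu hvu hmax'), hmax, hpos⟩
  · obtain ⟨r, rfl⟩ := o.exists_smul_eq_of_areaForm_eq_zero (sub_ne_zero.2 hwu) hω
    have hr : r < 0 := by
      have := hd w hw hwu
      rw [← sub_neg, ← inner_sub_left, real_inner_smul_right, real_inner_self_eq_norm_sq] at this
      exact neg_of_mul_neg_left this (sq_nonneg _)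
    refine ⟨e, Finset.mem_insert_self _ _, isMaxOn_iff.2 fun x hx => ?_, ?_⟩
    · obtain rfl | hxu := eq_or_ne x u
      exacts [le_rfl, (he x hx hxu).le]
    · have := he w hw hwu
      rw [← sub_neg, ← inner_sub_left] at this
      rw [real_inner_smul_left]
      exact mul_pos_of_neg_of_neg hr this
  · obtain ⟨v, hv, hvu, hmax, hpos⟩ :=
      o.exists_isMaxOn_inner_rightAngleRotation hd ⟨w, hw, hwu, hω⟩
    exact ⟨_, Finset.mem_insert_of_mem
      (o.rightAngleRotation_sub_mem_edgeNormals hu hv hvu.symm hmax), hmax, hpos⟩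

theorem exists_normal_of_isMaxOn_convexHull [DecidableEq E] {V : Finset E} (hV : 1 < V.card)
    {e : E → E} (he : ∀ u ∈ V, ∀ w ∈ V, w ≠ u → ⟪w, e u⟫ < ⟪u, e u⟫) {q d : E}
    (hq : q ∈ convexHull ℝ (V : Set E)) (hd : d ≠ 0)
    (hqd : IsMaxOn (⟪·, d⟫) (convexHull ℝ (V : Set E)) q) :
    ∃ m ∈ o.edgeNormals V ∪ V.image e,
      IsMaxOn (⟪·, m⟫) (convexHull ℝ (V : Set E)) q ∧ 0 < ⟪d, m⟫ := by
  obtain ⟨u, hu, humax⟩ := V.exists_max_image (⟪·, d⟫) (Finset.card_pos.1 (by omega))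
  have humax' : IsMaxOn (⟪·, d⟫) V u := isMaxOn_iff.2 humax
  have hqu : ⟪q, d⟫ = ⟪u, d⟫ :=
    le_antisymm (isMaxOn_iff.1 (isMaxOn_inner_convexHull humax') q hq)
      (isMaxOn_iff.1 hqd u (subset_convexHull ℝ _ hu))
  by_cases hedge : ∃ v ∈ V, v ≠ u ∧ ⟪v, d⟫ = ⟪u, d⟫
  · obtain ⟨v, hv, hvu, hvd⟩ := hedge
    obtain ⟨m, hm, c, hc, rfl⟩ :=
      o.exists_mem_edgeNormals_of_isMaxOn hu hv hvu.symm hd humax' hvd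
    have hm₀ : m ≠ 0 := by rintro rfl; simp at hd
    refine ⟨m, Finset.mem_union_left _ hm, isMaxOn_inner_of_smul hc hqd, ?_⟩
    rw [real_inner_smul_left]
    exact mul_pos hc (real_inner_self_pos.2 hm₀)
  push Not at hedge
  have hstrict : ∀ w ∈ V, w ≠ u → ⟪w, d⟫ < ⟪u, d⟫ := fun w hw hwu =>
    (humax w hw).lt_of_ne (hedge w hw hwu)
  obtain rfl : q = u := by
    by_contra hqu'
    exact (inner_lt_of_mem_convexHull hstrict hq hqu').ne hqu
  obtain ⟨m, hm, hmax, hpos⟩ :=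
    o.exists_normal_at_vertex hu (V.exists_mem_ne hV q) hstrict (he q hu)
  refine ⟨m, ?_, isMaxOn_inner_convexHull hmax, hpos⟩
  rcases Finset.mem_insert.1 hm with rfl | hm
  exacts [Finset.mem_union_right _ (Finset.mem_image_of_mem e hu), Finset.mem_union_left _ hm]

end Orientation

instance : Fact (Module.finrank ℝ (EuclideanSpace ℝ (Fin 2)) = 2) := ⟨finrank_euclideanSpace_fin⟩

theorem exists_determines_of_two_le_ncard {X : Set (EuclideanSpace ℝ (Fin 2))}
    (hX : IsPolytope X) (h2 : 2 ≤ (X.extremePoints ℝ).ncard) :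
    ∃ D : Finset (EuclideanSpace ℝ (Fin 2)), D.card ≤ 2 * (X.extremePoints ℝ).ncard ∧
      Determines {Y | IsPolytope Y} D X := by
  classical
  obtain ⟨V, hVX, rfl⟩ : ∃ V : Finset (EuclideanSpace ℝ (Fin 2)),
      ↑V = X.extremePoints ℝ ∧ X = convexHull ℝ ↑V :=
    ⟨_, hX.extremePoints_finite.coe_toFinset,
      by rw [hX.extremePoints_finite.coe_toFinset, hX.convexHull_extremePoints]⟩
  rw [← hVX, Set.ncard_coe_finset] at h2 ⊢
  have hexp (v) (hv : v ∈ V) : ∃ e, ∀ x ∈ convexHull ℝ ↑V, x ≠ v → ⟪x, e⟫ < ⟪v, e⟫ :=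
    exists_forall_inner_lt_of_mem_extremePoints V.finite_toSet (hVX ▸ Finset.mem_coe.2 hv)
  choose! e he using hexp
  let o : Orientation ℝ (EuclideanSpace ℝ (Fin 2)) (Fin 2) :=
    (EuclideanSpace.basisFun (Fin 2) ℝ).toBasis.orientation
  refine ⟨o.edgeNormals V ∪ V.image e, ?_, determines_of_separates_of_exposes hX
    (fun p hp => exists_supp_lt_of_notMem hX (fun q hq d hd hqd => ?_) hp) (fun v hv => ?_)⟩
  · have := (Finset.card_union_le _ _).trans
      (add_le_add (o.card_edgeNormals_le hVX.le) (Finset.card_image_le (s := V) (f := e)))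
    omega
  · exact o.exists_normal_of_isMaxOn_convexHull (by omega)
      (fun u hu w hw => he u hu w (subset_convexHull ℝ _ hw)) hq hd hqd
  · rw [← hVX, Finset.mem_coe] at hv
    exact ⟨e v, Finset.mem_union_right _ (Finset.mem_image_of_mem e hv), he v hv⟩

/-- a polytope `X ⊆ ℝ²` with exactly `n_v` vertices is determined by at
most `3 n_v + 1` directions within the class of all polytopes in `ℝ²`. -/
theorem stmt_3 (n_v : ℕ) (X : Set (EuclideanSpace ℝ (Fin 2))) (hX : IsPolytope X)
    (hcard : (Set.extremePoints ℝ X).ncard = n_v) :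
    ∃ D : Finset (EuclideanSpace ℝ (Fin 2)), D.card ≤ 3 * n_v + 1 ∧
      Determines {Y | IsPolytope Y} D X := by
  rcases Nat.lt_or_ge n_v 2 with h | h
  · have hpos : 0 < n_v := hcard ▸ (Set.ncard_pos hX.extremePoints_finite).2
      (hX.isCompact.extremePoints_nonempty hX.nonempty)
    obtain ⟨v, hv⟩ := Set.ncard_eq_one.1 (hcard.trans (by omega : n_v = 1))
    obtain ⟨D, hD, hdet⟩ := exists_determines_singleton v
    refine ⟨D, by omega, ?_⟩
    rwa [← hX.convexHull_extremePoints, hv, convexHull_singleton]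
  · obtain ⟨D, hD, hdet⟩ := exists_determines_of_two_le_ncard hX (hcard ▸ h)
    exact ⟨D, by omega, hdet⟩
end

section
/- Let n ≥ 1 and let X ⊆ ℝⁿ be a polytope with exactly 2 vertices (extreme points). Then there exists a finite set D ⊆ ℝⁿ of directions with |D| ≤ 3n - 1 such that D determines X within the class of all polytopes in ℝⁿ having at most 2 extreme points. (Convergence of Algorithm 2 in the case n_v = 2 with known bound n̄ = 2: it terminates after at most 3n - 1 oracle calls with X_v = {a, b}.) -/
/-! A polytope with at most two extreme points is a segment `[a, b]`, whose support function is
`d ↦ max ⟪a, d⟫ ⟪b, d⟫`. The directions `± eᵢ` recover each coordinate pair `{aᵢ, bᵢ}` up to order.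
Fix `k` with `bₖ < aₖ`; for small `t > 0` the direction `eₖ + t eᵢ` is maximised at the endpoint
with the larger `k`-th coordinate, which assigns the `i`-th coordinates to the right endpoints.
This uses `2n + (n - 1)` directions. -/

open RealInnerProductSpace

lemma supp_segment {n : ℕ} (a b d : EuclideanSpace ℝ (Fin n)) :
    supp (segment ℝ a b) d = max ⟪a, d⟫ ⟪b, d⟫ := by
  have himage : (fun v => ⟪v, d⟫) '' segment ℝ a b = segment ℝ ⟪a, d⟫ ⟪b, d⟫ :=
    image_segment ℝ ((innerₛₗ ℝ).flip d).toAffineMap a b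
  rw [supp, himage, segment_eq_uIcc, Set.uIcc, csSup_Icc inf_le_sup]

namespace IsPolytope

variable {n : ℕ} {X : Set (EuclideanSpace ℝ (Fin n))}

lemma extremePoints_finite_s10 (hX : IsPolytope X) : (Set.extremePoints ℝ X).Finite := by
  obtain ⟨F, -, rfl⟩ := hX
  exact F.finite_toSet.subset extremePoints_convexHull_subset

lemma isCompact_s10 (hX : IsPolytope X) : IsCompact X := by
  obtain ⟨F, -, rfl⟩ := hX
  exact F.finite_toSet.isCompact_convexHull ℝ

lemma convex_s10 (hX : IsPolytope X) : Convex ℝ X := by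
  obtain ⟨F, -, rfl⟩ := hX
  exact convex_convexHull ℝ _

lemma nonempty_s10 (hX : IsPolytope X) : X.Nonempty := by
  obtain ⟨F, hF, rfl⟩ := hX
  exact convexHull_nonempty_iff.mpr (Finset.coe_nonempty.mpr hF)

lemma convexHull_extremePoints_s10 (hX : IsPolytope X) :
    convexHull ℝ (Set.extremePoints ℝ X) = X := by
  have hclosure := closure_convexHull_extremePoints hX.isCompact_s10 hX.convex_s10
  rwa [(hX.extremePoints_finite_s10.isCompact_convexHull ℝ).isClosed.closure_eq] at hclosure

lemma exists_eq_segment (hX : IsPolytope X) (hcard : (Set.extremePoints ℝ X).ncard ≤ 2) :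
    ∃ a b, X = segment ℝ a b := by
  have hpos : 0 < (Set.extremePoints ℝ X).ncard :=
    (Set.ncard_pos hX.extremePoints_finite_s10).mpr (hX.isCompact_s10.extremePoints_nonempty hX.nonempty_s10)
  rw [← hX.convexHull_extremePoints_s10]
  obtain hone | htwo : (Set.extremePoints ℝ X).ncard = 1 ∨ (Set.extremePoints ℝ X).ncard = 2 := by
    omega
  · obtain ⟨a, ha⟩ := Set.ncard_eq_one.mp hone
    exact ⟨a, a, by rw [ha, convexHull_singleton, segment_same]⟩
  · obtain ⟨a, b, -, hab⟩ := Set.ncard_eq_two.mp htwo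
    exact ⟨a, b, by rw [hab, convexHull_pair]⟩

end IsPolytope

lemma exists_pos_mul_abs_lt {ι : Type*} [Fintype ι] (f : ι → ℝ) {ε : ℝ} (hε : 0 < ε) :
    ∃ t > 0, ∀ i, t * |f i| < ε := by
  set S := ∑ i, |f i|
  have hS : 0 ≤ S := Finset.sum_nonneg fun i _ => abs_nonneg (f i)
  refine ⟨ε / (S + 1), by positivity, fun i => ?_⟩
  calc ε / (S + 1) * |f i| ≤ ε / (S + 1) * S := by
        gcongr; exact Finset.single_le_sum (fun j _ => abs_nonneg (f j)) (Finset.mem_univ i)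
    _ < ε / (S + 1) * (S + 1) := by gcongr; linarith
    _ = ε := div_mul_cancel₀ ε (by positivity)

lemma add_mul_lt_add_mul_of_abs_sub_le {a b x y t B : ℝ} (ht : 0 ≤ t) (hxy : |x - y| ≤ B)
    (hB : t * B < a - b) : b + t * y < a + t * x := by
  have hyx : y - x ≤ B := (le_abs_self _).trans ((abs_sub_comm y x).trans_le hxy)
  nlinarith

section Probes

open EuclideanSpace Finset

variable {n : ℕ}

noncomputable def probeDirections (k : Fin n) (t : ℝ) : Finset (EuclideanSpace ℝ (Fin n)) :=
  (univ.image fun i => single i 1) ∪ (univ.image fun i => single i (-1)) ∪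
    ((univ.erase k).image fun i => single k 1 + single i t)

lemma card_probeDirections_le (k : Fin n) (t : ℝ) : (probeDirections k t).card ≤ 3 * n - 1 := by
  have hn : 0 < n := k.pos
  calc (probeDirections k t).card
      ≤ (univ.image fun i : Fin n => single i (1 : ℝ)).card
        + (univ.image fun i : Fin n => single i (-1 : ℝ)).card
        + ((univ.erase k).image fun i => single k (1 : ℝ) + single i t).card :=
        (card_union_le _ _).trans (add_le_add_left (card_union_le _ _) _)
    _ ≤ n + n + (n - 1) := by
        gcongr <;> exact card_image_le.trans (by simp)
    _ = 3 * n - 1 := by omega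

lemma eq_and_eq_of_tilted_max_eq {a b c e : EuclideanSpace ℝ (Fin n)} {k : Fin n} {t : ℝ}
    (ht : 0 < t) (hgap : ∀ i, t * |a i - b i| < a k - b k)
    (hsum : ∀ i, c i + e i = a i + b i) (habs : ∀ i, |c i - e i| = |a i - b i|)
    (hck : c k = a k)
    (htilt : ∀ i ≠ k, max (c k + t * c i) (e k + t * e i) = max (a k + t * a i) (b k + t * b i)) :
    c = a ∧ e = b := by
  have hek : e k = b k := by linarith [hsum k]
  have hc : c = a := by
    ext i
    rcases eq_or_ne i k with rfl | hik
    · exact hck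
    have h := htilt i hik
    rw [hck, hek, max_eq_left (add_mul_lt_add_mul_of_abs_sub_le ht.le (habs i).le (hgap i)).le,
      max_eq_left (add_mul_lt_add_mul_of_abs_sub_le ht.le le_rfl (hgap i)).le] at h
    exact mul_left_cancel₀ ht.ne' (by linarith)
  subst hc
  refine ⟨rfl, ?_⟩
  ext i
  linarith [hsum i]

lemma segment_eq_of_max_inner_probeDirections_eq {a b c e : EuclideanSpace ℝ (Fin n)} {k : Fin n}
    {t : ℝ} (hk : b k < a k) (ht : 0 < t) (hgap : ∀ i, t * |a i - b i| < a k - b k)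
    (h : ∀ d ∈ probeDirections k t, max ⟪c, d⟫ ⟪e, d⟫ = max ⟪a, d⟫ ⟪b, d⟫) :
    segment ℝ c e = segment ℝ a b := by
  have hmax : ∀ i, max (c i) (e i) = max (a i) (b i) := fun i => by
    simpa [inner_single_right] using h (single i 1) (by simp [probeDirections])
  have hmin : ∀ i, min (c i) (e i) = min (a i) (b i) := fun i => by
    have hi := h (single i (-1)) (by simp [probeDirections])
    simpa [inner_single_right, max_neg_neg] using hi
  have htilt : ∀ i ≠ k,
      max (c k + t * c i) (e k + t * e i) = max (a k + t * a i) (b k + t * b i) := fun i hik => by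
    simpa [inner_add_right, inner_single_right, mul_comm] using
      h (single k 1 + single i t) <|
        mem_union_right _ (mem_image_of_mem _ (mem_erase.mpr ⟨hik, mem_univ i⟩))
  have hsum : ∀ i, c i + e i = a i + b i := fun i => by
    rw [← min_add_max, hmin, hmax, min_add_max]
  have habs : ∀ i, |c i - e i| = |a i - b i| := fun i => by
    rw [← max_sub_min_eq_abs', hmax, hmin, max_sub_min_eq_abs']
  have hmax_k : max (c k) (e k) = a k := by rw [hmax, max_eq_left hk.le]
  rcases max_choice (c k) (e k) with hck | hek
  · obtain ⟨rfl, rfl⟩ := eq_and_eq_of_tilted_max_eq ht hgap hsum habs (hck ▸ hmax_k) htilt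
    rfl
  · obtain ⟨rfl, rfl⟩ := eq_and_eq_of_tilted_max_eq ht hgap (fun i => by rw [add_comm, hsum])
      (fun i => by rw [abs_sub_comm, habs]) (hek ▸ hmax_k)
      (fun i hik => by rw [max_comm, htilt i hik])
    exact segment_symm ℝ _ _

end Probes

theorem stmt_10_general (n : ℕ) (X : Set (EuclideanSpace ℝ (Fin n)))
    (hX : IsPolytope X) (hcard : (Set.extremePoints ℝ X).ncard = 2) :
    ∃ D : Finset (EuclideanSpace ℝ (Fin n)), D.card ≤ 3 * n - 1 ∧
      Determines {Y | IsPolytope Y ∧ (Set.extremePoints ℝ Y).ncard ≤ 2} D X := by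
  obtain ⟨a, b, hab, hext⟩ := Set.ncard_eq_two.mp hcard
  have hXab : X = segment ℝ a b := by
    rw [← hX.convexHull_extremePoints_s10, hext, convexHull_pair]
  obtain ⟨k, hk⟩ : ∃ k, a k ≠ b k := by
    by_contra! h
    exact hab (by ext i; exact h i)
  wlog hlt : b k < a k generalizing a b
  · exact this b a hab.symm (by rw [hext, Set.pair_comm]) (by rw [hXab, segment_symm]) hk.symm
      (lt_of_le_of_ne (not_lt.mp hlt) hk)
  obtain ⟨t, ht, hgap⟩ := exists_pos_mul_abs_lt (fun i => a i - b i) (sub_pos.mpr hlt)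
  refine ⟨probeDirections k t, card_probeDirections_le k t, ?_⟩
  rintro Y ⟨hY, hY2⟩ hsupp
  obtain ⟨c, e, rfl⟩ := hY.exists_eq_segment hY2
  subst hXab
  exact segment_eq_of_max_inner_probeDirections_eq hlt ht hgap fun d hd => by
    simpa only [supp_segment] using hsupp d hd

/-- a polytope `X ⊆ ℝⁿ` (`n ≥ 1`) with exactly `2` vertices is
determined by at most `3n - 1` directions within the class of polytopes in `ℝⁿ`
with at most `2` extreme points. -/
theorem stmt_10 (n : ℕ) (hn : 1 ≤ n) (X : Set (EuclideanSpace ℝ (Fin n)))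
    (hX : IsPolytope X) (hcard : (Set.extremePoints ℝ X).ncard = 2) :
    ∃ D : Finset (EuclideanSpace ℝ (Fin n)), D.card ≤ 3 * n - 1 ∧
      Determines {Y | IsPolytope Y ∧ (Set.extremePoints ℝ Y).ncard ≤ 2} D X :=
  stmt_10_general n X hX hcard
end
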